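/- If β > 1, then the map f_β(x) = 1/(1 + exp(−2β(2x−1))) has exactly three fixed points in [0,1]: one point c₀ ∈ (0, 1/2), the point 1/2, and one point c₁ ∈ (1/2, 1), and moreover c₁ = 1 − c₀. -/

import Mathlib

noncomputable def f (β x : ℝ) : ℝ := 1 / (1 + Real.exp (-2*β*(2*x-1)))

/-!
Write `f β x = σ(2β(2x - 1))` with `σ` the logistic sigmoid, so that `f β (1 - x) = 1 - f β x`
and `1/2` is a fixed point. Since `σ' = σ(1 - σ)` increases on `(-∞, 0]`, `f β` is strictly convex
on `(-∞, 1/2]`, hence `f β x - x` has at most two zeros there, one of them `1/2`. It has a second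
one in `(0, 1/2)` by the intermediate value theorem: it is positive at `0` and, as its derivative
at `1/2` is `β - 1 > 0`, negative just left of `1/2`. Fixed points above `1/2` are reflections of
those below.
-/

open Real Set Filter Topology

lemma StrictConvexOn.eq_of_map_eq_of_lt {s : Set ℝ} {g : ℝ → ℝ} (hg : StrictConvexOn ℝ s g)
    {x y z : ℝ} (hx : x ∈ s) (hy : y ∈ s) (hz : z ∈ s) (hxz : x < z) (hyz : y < z)
    (hgx : g x = g z) (hgy : g y = g z) : x = y := by
  have not_three : ∀ {a b : ℝ}, a ∈ s → a < b → b < z → g a = g z → g b = g z → False := by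
    intro a b ha hab hbz hga hgb
    have hb : b ∈ openSegment ℝ a z := by rw [openSegment_eq_Ioo (hab.trans hbz)]; exact ⟨hab, hbz⟩
    have := hg.lt_on_openSegment ha hz (hab.trans hbz).ne hb
    simp [hga, hgb] at this
  rcases lt_trichotomy x y with h | h | h
  · exact (not_three hx h hyz hgx hgy).elim
  · exact h
  · exact (not_three hy h hxz hgy hgx).elim

lemma exists_mem_Ioo_neg_of_hasDerivAt_pos {g : ℝ → ℝ} {g' x₀ l : ℝ} (hg : HasDerivAt g g' x₀)
    (hg' : 0 < g') (hgx₀ : g x₀ = 0) (hl : l < x₀) : ∃ a ∈ Ioo l x₀, g a < 0 := by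
  have hslope : ∀ᶠ y in 𝓝[<] x₀, 0 < slope g x₀ y :=
    ((hasDerivAt_iff_tendsto_slope.1 hg).mono_left (nhdsLT_le_nhdsNE x₀)).eventually
      (eventually_gt_nhds hg')
  obtain ⟨a, hpos, ha⟩ := (hslope.and (Ioo_mem_nhdsLT hl)).exists
  exact ⟨a, ha, neg_of_slope_pos ha.2 hpos hgx₀⟩

lemma strictMonoOn_mul_one_sub : StrictMonoOn (fun s : ℝ => s * (1 - s)) (Iic (1/2)) := by
  intro a ha b hb hab
  simp only [mem_Iic] at ha hb
  nlinarith

lemma f_eq_sigmoid (β x : ℝ) : f β x = sigmoid (2 * β * (2 * x - 1)) := by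
  rw [f, sigmoid_def, one_div, neg_mul, neg_mul]

lemma f_half (β : ℝ) : f β (1/2) = 1/2 := by
  norm_num [f_eq_sigmoid]

lemma f_one_sub (β x : ℝ) : f β (1 - x) = 1 - f β x := by
  rw [f_eq_sigmoid, f_eq_sigmoid, ← sigmoid_neg]
  congr 1
  ring

lemma hasDerivAt_f (β x : ℝ) :
    HasDerivAt (f β)
      (4 * β * (sigmoid (2 * β * (2 * x - 1)) * (1 - sigmoid (2 * β * (2 * x - 1))))) x := by
  have hu : HasDerivAt (fun y => 2 * β * (2 * y - 1)) (4 * β) x :=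
    ((((hasDerivAt_id' x).const_mul 2).sub_const 1).const_mul (2 * β)).congr_deriv (by ring)
  rw [show f β = sigmoid ∘ fun y => 2 * β * (2 * y - 1) from funext (f_eq_sigmoid β)]
  exact ((hasDerivAt_sigmoid _).comp x hu).congr_deriv (by ring)

lemma continuous_f (β : ℝ) : Continuous (f β) :=
  continuous_iff_continuousAt.2 fun x => (hasDerivAt_f β x).continuousAt

lemma strictConvexOn_f {β : ℝ} (hβ : 0 < β) : StrictConvexOn ℝ (Iic (1/2)) (f β) := by
  refine StrictMonoOn.strictConvexOn_of_deriv (convex_Iic _) (continuous_f β).continuousOn ?_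
  rw [interior_Iic]
  intro x hx y hy hxy
  have sigmoid_le_half : ∀ z ∈ Iio (1/2 : ℝ), sigmoid (2 * β * (2 * z - 1)) ≤ 1/2 := fun z hz =>
    (sigmoid_le (b := 0) (by nlinarith [mem_Iio.1 hz])).trans_eq (by norm_num)
  simp only [(hasDerivAt_f β _).deriv]
  exact mul_lt_mul_of_pos_left (strictMonoOn_mul_one_sub (sigmoid_le_half x hx)
    (sigmoid_le_half y hy) (sigmoid_lt (by nlinarith))) (by positivity)

lemma strictConvexOn_f_sub_id {β : ℝ} (hβ : 0 < β) :
    StrictConvexOn ℝ (Iic (1/2)) (fun x => f β x - x) :=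
  (strictConvexOn_f hβ).sub_concaveOn (concaveOn_id (convex_Iic _))

lemma exists_mem_Ioo_f_eq_self {β : ℝ} (hβ : 1 < β) : ∃ c ∈ Ioo (0:ℝ) (1/2), f β c = c := by
  set g := fun x => f β x - x with hg
  have hg' : HasDerivAt g (β - 1) (1/2) := by
    refine ((hasDerivAt_f β (1/2)).sub (hasDerivAt_id (1/2 : ℝ))).congr_deriv ?_
    norm_num
    ring
  obtain ⟨a, ha, hga⟩ := exists_mem_Ioo_neg_of_hasDerivAt_pos hg' (by linarith)
    (sub_eq_zero.2 (f_half β)) (by norm_num : (0:ℝ) < 1/2)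
  have hg0 : 0 < g 0 := by simp [hg, f_eq_sigmoid, sigmoid_pos]
  obtain ⟨c, hc, hgc⟩ := intermediate_value_Ioo' ha.1.le
    ((continuous_f β).sub continuous_id).continuousOn ⟨hga, hg0⟩
  exact ⟨c, ⟨hc.1, hc.2.trans ha.2⟩, sub_eq_zero.1 hgc⟩

lemma eq_of_f_eq_self_of_lt_half {β c x : ℝ} (hβ : 0 < β) (hc : c < 1/2) (hfc : f β c = c)
    (hx : x < 1/2) (hfx : f β x = x) : x = c :=
  (strictConvexOn_f_sub_id hβ).eq_of_map_eq_of_lt hx.le hc.le (mem_Iic.2 le_rfl) hx hc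
    (by simp only [hfx, f_half, sub_self]) (by simp only [hfc, f_half, sub_self])

theorem stmt6 (β : ℝ) (hβ : 1 < β) :
    ∃ c₀ ∈ Set.Ioo (0:ℝ) (1/2), ∃ c₁ ∈ Set.Ioo (1/2:ℝ) 1,
      c₁ = 1 - c₀ ∧ f β c₀ = c₀ ∧ f β (1/2) = 1/2 ∧ f β c₁ = c₁ ∧
      (∀ x ∈ Set.Icc (0:ℝ) 1, f β x = x → x = c₀ ∨ x = 1/2 ∨ x = c₁) := by
  obtain ⟨c₀, hc₀, hfc₀⟩ := exists_mem_Ioo_f_eq_self hβ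
  have hβ₀ : 0 < β := by linarith
  refine ⟨c₀, hc₀, 1 - c₀, ⟨by linarith [hc₀.2], by linarith [hc₀.1]⟩, rfl, hfc₀, f_half β,
    by rw [f_one_sub, hfc₀], fun x _ hfx => ?_⟩
  rcases lt_trichotomy x (1/2) with hx | hx | hx
  · exact Or.inl (eq_of_f_eq_self_of_lt_half hβ₀ hc₀.2 hfc₀ hx hfx)
  · exact Or.inr (Or.inl hx)
  · have hreflect : 1 - x = c₀ :=
      eq_of_f_eq_self_of_lt_half hβ₀ hc₀.2 hfc₀ (by linarith) (by rw [f_one_sub, hfx])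
    exact Or.inr (Or.inr (by linarith))
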